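/- Let H be a complex Hilbert space and let E, F be effects on H. If either (E ⊓ F ≥ 0 and (1−E) ⊓ (1−F) ≥ 0) or ((1−E) ⊓ F ≥ 0 and E ⊓ (1−F) ≥ 0), then E and F are coexistent. -/
import Mathlib


variable {H : Type*} [NormedAddCommGroup H] [InnerProductSpace ℂ H] [CompleteSpace H]

/-- An effect on a complex Hilbert space: an operator `E` with `0 ≤ E ≤ 1` in the Loewner order. -/
def IsEffect (E : H →L[ℂ] H) : Prop := 0 ≤ E ∧ E ≤ 1

/-- Two effects `E` and `F` are coexistent if there are four effects `G₁₁, G₁₂, G₂₁, G₂₂` with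
`G₁₁ + G₁₂ = E`, `G₁₁ + G₂₁ = F` and `G₁₁ + G₁₂ + G₂₁ + G₂₂ = 1`. -/
def Coexistent (E F : H →L[ℂ] H) : Prop :=
  ∃ G₁₁ G₁₂ G₂₁ G₂₂ : H →L[ℂ] H,
    IsEffect G₁₁ ∧ IsEffect G₁₂ ∧ IsEffect G₂₁ ∧ IsEffect G₂₂ ∧
    G₁₁ + G₁₂ = E ∧ G₁₁ + G₂₁ = F ∧ G₁₁ + G₁₂ + G₂₁ + G₂₂ = 1

/-- The absolute value |A| of a selfadjoint operator: the positive square root of A². -/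
noncomputable def opAbs (A : H →L[ℂ] H) : H →L[ℂ] H := CFC.sqrt (A ^ 2)

/-- The generalized infimum E ⊓ F = ½(E + F - |E - F|). -/
noncomputable def ginf (E F : H →L[ℂ] H) : H →L[ℂ] H := (2 : ℂ)⁻¹ • (E + F - opAbs (E - F))

lemma opAbs_eq_posPart_add_negPart (D : H →L[ℂ] H) (hD : IsSelfAdjoint D) :
    opAbs D = D⁺ + D⁻ := by
  have h1 : (0 : H →L[ℂ] H) ≤ D⁺ + D⁻ :=
    add_nonneg (CFC.posPart_nonneg D) (CFC.negPart_nonneg D)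
  have hp := CFC.posPart_mul_negPart D
  have hn := CFC.negPart_mul_posPart D
  have hsub := CFC.posPart_sub_negPart D hD
  have sq : ∀ p n : H →L[ℂ] H, p * n = 0 → n * p = 0 → (p + n) ^ 2 = (p - n) ^ 2 := by
    intro p n h1 h2
    simp [pow_two, mul_add, add_mul, mul_sub, sub_mul, h1, h2]
  have h2 : (D⁺ + D⁻) ^ 2 = D ^ 2 := by rw [sq _ _ hp hn, hsub]
  rw [opAbs, ← h2, CFC.sqrt_sq _ h1]

theorem coexistent_of_ginf_nonneg_aux (E F : H →L[ℂ] H) (hE : IsEffect E) (hF : IsEffect F)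
    (h1 : 0 ≤ ginf E F) (h2 : 0 ≤ ginf (1 - E) (1 - F)) : Coexistent E F := by
  have hEsa : IsSelfAdjoint E := hE.1.isSelfAdjoint
  have hFsa : IsSelfAdjoint F := hF.1.isSelfAdjoint
  have hDsa : IsSelfAdjoint (E - F) := hEsa.sub hFsa
  obtain ⟨p, hpn, n, hnn, hsub, habs⟩ :
      ∃ p : H →L[ℂ] H, 0 ≤ p ∧ ∃ n : H →L[ℂ] H, 0 ≤ n ∧ p - n = E - F ∧
        opAbs (E - F) = p + n :=
    ⟨_, CFC.posPart_nonneg _, _, CFC.negPart_nonneg _, CFC.posPart_sub_negPart _ hDsa,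
      opAbs_eq_posPart_add_negPart _ hDsa⟩
  have hE2 : E = p - n + F := by rw [hsub]; abel
  have hneg : opAbs ((1 - E) - (1 - F)) = p + n := by
    rw [show (1 - E) - (1 - F) = -(E - F) by abel, opAbs, neg_sq, ← opAbs, habs]
  have g1 : ginf E F = F - n := by
    simp only [ginf, habs]; rw [hE2]; module
  have g2 : ginf (1 - E) (1 - F) = (1 - F) - p := by
    simp only [ginf, hneg]; rw [hE2]; module
  rw [g1] at h1
  rw [g2] at h2
  refine ⟨F - n, p, n, (1 - F) - p, ⟨h1, ?_⟩, ⟨hpn, ?_⟩, ⟨hnn, ?_⟩, ⟨h2, ?_⟩, ?_, ?_, ?_⟩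
  · calc F - n ≤ F := sub_le_self F hnn
      _ ≤ 1 := hF.2
  · calc p = E - (F - n) := by rw [hE2]; abel
      _ ≤ E := sub_le_self E h1
      _ ≤ 1 := hE.2
  · calc n = F - (F - n) := by abel
      _ ≤ F := sub_le_self F h1
      _ ≤ 1 := hF.2
  · calc (1 - F) - p ≤ 1 - F := sub_le_self _ hpn
      _ ≤ 1 := sub_le_self _ hF.1
  · rw [hE2]; abel
  · abel
  · abel

/-- The (GINF) sufficient condition for coexistence. -/
theorem coexistent_of_ginf_nonneg (E F : H →L[ℂ] H) (hE : IsEffect E) (hF : IsEffect F)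
    (h : (0 ≤ ginf E F ∧ 0 ≤ ginf (1 - E) (1 - F)) ∨
         (0 ≤ ginf (1 - E) F ∧ 0 ≤ ginf E (1 - F))) :
    Coexistent E F := by
  obtain ⟨h1, h2⟩ | ⟨h1, h2⟩ := h
  · exact coexistent_of_ginf_nonneg_aux E F hE hF h1 h2
  · have hF' : IsEffect (1 - F : H →L[ℂ] H) :=
      ⟨sub_nonneg.mpr hF.2, sub_le_self _ hF.1⟩
    have h2' : 0 ≤ ginf (1 - E) (1 - (1 - F)) := by rwa [sub_sub_cancel]
    obtain ⟨G₁₁, G₁₂, G₂₁, G₂₂, e₁₁, e₁₂, e₂₁, e₂₂, hA, hB, hC⟩ :=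
      coexistent_of_ginf_nonneg_aux E (1 - F) hE hF' h2 h2'
    refine ⟨G₁₂, G₁₁, G₂₂, G₂₁, e₁₂, e₁₁, e₂₂, e₂₁, by rw [add_comm]; exact hA, ?_, ?_⟩
    · calc G₁₂ + G₂₂ = (G₁₁ + G₁₂ + G₂₁ + G₂₂) - (G₁₁ + G₂₁) := by abel
        _ = 1 - (1 - F) := by rw [hC, hB]
        _ = F := by rw [sub_sub_cancel]
    · calc G₁₂ + G₁₁ + G₂₂ + G₂₁ = G₁₁ + G₁₂ + G₂₁ + G₂₂ := by abel
        _ = 1 := hC
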